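/- arXiv:1802.00286 — 2 statements merged into one kernel-verified Lean document; each statement's English description precedes it below -/
import Mathlib

section
/- A full circle C = {x ∈ ℂ : |x − p| = r} (r > 0) does not have property (Kˢ). In particular, properties (K) and (Kˢ) are not equivalent, since every circle has property (K). -/
open MeasureTheory Set Filter

noncomputable section

/-- A rigid motion of the plane `ℂ`: a map `x ↦ u·x + c` with `|u| = 1`. -/
def IsRigidMotion (f : ℂ → ℂ) : Prop :=
  ∃ u c : ℂ, ‖u‖ = 1 ∧ f = fun x => u * x + c

/-- A continuous movement: `M t` is a rigid motion for each `t ∈ [0,1]`,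
`(t,x) ↦ M t x` is continuous on `[0,1] × ℂ`, and `M 0 = id`. -/
def IsContMovement (M : ℝ → ℂ → ℂ) : Prop :=
  (∀ t ∈ Set.Icc (0:ℝ) 1, IsRigidMotion (M t)) ∧
  ContinuousOn (fun p : ℝ × ℂ => M p.1 p.2) (Set.Icc (0:ℝ) 1 ×ˢ Set.univ) ∧
  M 0 = id

/-- `sweep M A = W_M(A)`, the set of points touched by the moving set `A`. -/
def sweep (M : ℝ → ℂ → ℂ) (A : Set ℂ) : Set ℂ :=
  {y | ∃ t ∈ Set.Icc (0:ℝ) 1, ∃ x ∈ A, M t x = y}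

/-- Property (K). -/
def HasPropK (A : Set ℂ) : Prop :=
  ∃ α : ℂ → ℂ, IsRigidMotion α ∧ α ≠ id ∧
    ∀ ε : ℝ, 0 < ε → ∃ M : ℝ → ℂ → ℂ, IsContMovement M ∧ M 1 = α ∧
      MeasureTheory.volume (sweep M A) < ENNReal.ofReal ε

/-- Property (Kˢ). -/
def HasPropKs (A : Set ℂ) : Prop :=
  ∀ α : ℂ → ℂ, IsRigidMotion α →
    ∀ ε : ℝ, 0 < ε → ∃ M : ℝ → ℂ → ℂ, IsContMovement M ∧ M 1 = α ∧
      MeasureTheory.volume (sweep M A) < ENNReal.ofReal ε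

/-- A trivial (K)-set: covered by a null set which is a union of parallel
lines or a union of concentric circles. -/
def IsTrivialKSet (A : Set ℂ) : Prop :=
  ∃ N : Set ℂ, MeasureTheory.volume N = 0 ∧ A ⊆ N ∧
    ((∃ v : ℂ, v ≠ 0 ∧ ∀ x ∈ N, ∀ t : ℝ, x + t * v ∈ N) ∨
     (∃ c : ℂ, ∀ x ∈ N, ∀ y : ℂ, ‖y - c‖ = ‖x - c‖ → y ∈ N))

/-- The rotation `R_{c,φ}` about `c` by angle `φ`. -/
def rot (c : ℂ) (φ : ℝ) : ℂ → ℂ := fun x => Complex.exp (φ * Complex.I) * (x - c) + c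

/-- `E` is the elementary movement `E^α` determined by the rigid motion `α`. -/
def IsElemMovement (α : ℂ → ℂ) (E : ℝ → ℂ → ℂ) : Prop :=
  (∃ c : ℂ, α = (fun x => x + c) ∧ ∀ t : ℝ, E t = fun x => x + (t : ℂ) * c) ∨
  (∃ (a : ℂ) (φ : ℝ), |φ| < Real.pi ∧ α = rot a φ ∧ ∀ t : ℝ, E t = rot a (t * φ))

/-- The norm `‖f‖ = |u| + |v|` of an affine map `f x = u·x + v`. -/
def Lnorm (f : ℂ → ℂ) : ℝ := ‖f 1 - f 0‖ + ‖f 0‖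

/-!
A movement ending in a translation by `2r` sweeps the whole closed disc bounded by the circle:
for `q` in the disc, the distance from `q` to the moving centre grows continuously from at most
`r` to at least `r`, so at some time `q` lies on the moved circle. Conversely, rotating the
circle about its centre keeps it inside itself, so the swept set is the circle, a null set.
-/

theorem IsRigidMotion.sphere_subset_image {f : ℂ → ℂ} (hf : IsRigidMotion f) (p : ℂ) (r : ℝ) :
    Metric.sphere (f p) r ⊆ f '' Metric.sphere p r := by
  obtain ⟨u, c, hu, rfl⟩ := hf
  have hu0 : u ≠ 0 := norm_ne_zero_iff.mp (by rw [hu]; exact one_ne_zero)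
  intro q hq
  refine ⟨(q - c) / u, ?_, by field_simp; ring⟩
  rw [mem_sphere_iff_norm] at hq ⊢
  rw [show (q - c) / u - p = (q - (u * p + c)) / u by field_simp; ring, norm_div, hu, div_one, hq]

theorem IsContMovement.continuousOn_orbit {M : ℝ → ℂ → ℂ} (hM : IsContMovement M) (x : ℂ) :
    ContinuousOn (fun t => M t x) (Icc 0 1) :=
  hM.2.1.comp (Continuous.prodMk_left x).continuousOn fun _ ht => ⟨ht, mem_univ x⟩

theorem IsContMovement.mem_sweep_sphere {M : ℝ → ℂ → ℂ} (hM : IsContMovement M) {p q : ℂ}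
    {r : ℝ} (h₀ : dist q p ≤ r) (h₁ : r ≤ dist q (M 1 p)) :
    q ∈ sweep M (Metric.sphere p r) := by
  have hdist : ContinuousOn (fun t => dist q (M t p)) (Icc 0 1) :=
    (continuous_const.dist continuous_id).comp_continuousOn (hM.continuousOn_orbit p)
  have hr : r ∈ Icc (dist q (M 0 p)) (dist q (M 1 p)) := ⟨by rwa [hM.2.2, id], h₁⟩
  obtain ⟨t, ht, hqt⟩ := intermediate_value_Icc zero_le_one hdist hr
  obtain ⟨x, hx, hxq⟩ := (hM.1 t ht).sphere_subset_image p r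
    (by rw [mem_sphere_iff_norm, ← dist_eq_norm, ← hqt])
  exact ⟨t, ht, x, hx, hxq⟩

theorem closedBall_subset_sweep_of_translation {M : ℝ → ℂ → ℂ} (hM : IsContMovement M)
    (p : ℂ) {r : ℝ} (hM₁ : M 1 = fun x => x + ((2 * r : ℝ) : ℂ)) :
    Metric.closedBall p r ⊆ sweep M (Metric.sphere p r) := by
  intro q hq
  rw [Metric.mem_closedBall] at hq
  refine hM.mem_sweep_sphere hq ?_
  have hshift : dist p (M 1 p) = 2 * r := by
    have : 0 ≤ r := dist_nonneg.trans hq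
    simp [hM₁, dist_eq_norm, abs_of_nonneg this]
  linarith [dist_triangle_left p (M 1 p) q]

theorem not_hasPropKs_sphere (p : ℂ) {r : ℝ} (hr : 0 < r) :
    ¬ HasPropKs (Metric.sphere p r) := by
  intro h
  have hball_ne_top : volume (Metric.closedBall p r) ≠ ⊤ := measure_closedBall_lt_top.ne
  have hball_pos : 0 < (volume (Metric.closedBall p r)).toReal :=
    ENNReal.toReal_pos (Metric.measure_closedBall_pos volume p hr).ne' hball_ne_top
  obtain ⟨M, hM, hM₁, hvol⟩ :=
    h (fun x => x + ((2 * r : ℝ) : ℂ)) ⟨1, (2 * r : ℝ), norm_one, by simp⟩ _ hball_pos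
  rw [ENNReal.ofReal_toReal hball_ne_top] at hvol
  exact (measure_mono (closedBall_subset_sweep_of_translation hM p hM₁)).not_gt hvol

theorem sweep_subset_of_mapsTo {M : ℝ → ℂ → ℂ} {A : Set ℂ}
    (hA : ∀ t ∈ Icc (0 : ℝ) 1, MapsTo (M t) A A) : sweep M A ⊆ A := by
  rintro _ ⟨t, ht, x, hx, rfl⟩
  exact hA t ht hx

theorem hasPropK_of_invariant_null {A : Set ℂ} (hA : volume A = 0) {M : ℝ → ℂ → ℂ}
    (hM : IsContMovement M) (hM₁ : M 1 ≠ id) (hMA : ∀ t ∈ Icc (0 : ℝ) 1, MapsTo (M t) A A) :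
    HasPropK A := by
  refine ⟨M 1, hM.1 1 ⟨zero_le_one, le_rfl⟩, hM₁, fun ε hε => ⟨M, hM, rfl, ?_⟩⟩
  rw [measure_mono_null (sweep_subset_of_mapsTo hMA) hA]
  exact ENNReal.ofReal_pos.mpr hε

theorem isRigidMotion_rot (c : ℂ) (φ : ℝ) : IsRigidMotion (rot c φ) :=
  ⟨_, c - Complex.exp (φ * Complex.I) * c, Complex.norm_exp_ofReal_mul_I φ, by
    funext x; simp only [rot]; ring⟩

theorem isContMovement_rot (c : ℂ) (φ : ℝ) : IsContMovement fun t => rot c (t * φ) := by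
  refine ⟨fun t _ => isRigidMotion_rot c _, ?_, by funext x; simp [rot]⟩
  simp only [rot]
  fun_prop

theorem rot_mapsTo_sphere (c : ℂ) (φ r : ℝ) :
    MapsTo (rot c φ) (Metric.sphere c r) (Metric.sphere c r) := by
  intro x hx
  rw [mem_sphere_iff_norm] at hx ⊢
  simp [rot, Complex.norm_exp_ofReal_mul_I, hx]

theorem rot_pi_ne_id (c : ℂ) : rot c Real.pi ≠ id := by
  intro h
  have h2 : (2 : ℂ) = 0 := by
    have := congrFun h (c + 1)
    simp only [rot, Complex.exp_pi_mul_I, id] at this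
    linear_combination -this
  norm_num at h2

theorem hasPropK_sphere (p : ℂ) (r : ℝ) : HasPropK (Metric.sphere p r) :=
  hasPropK_of_invariant_null (Measure.addHaar_sphere volume p r) (isContMovement_rot p Real.pi)
    (by simpa using rot_pi_ne_id p) fun t _ => rot_mapsTo_sphere p _ r

/-- A full circle does not have property (Kˢ), but has property (K);
hence (K) and (Kˢ) are not equivalent. -/
theorem stmt_16 (p : ℂ) (r : ℝ) (hr : 0 < r) :
    ¬ HasPropKs (Metric.sphere p r) ∧ HasPropK (Metric.sphere p r) :=
  ⟨not_hasPropKs_sphere p hr, hasPropK_sphere p r⟩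
end
end

section
/- A half line (a closed ray {p + t·v : t ≥ 0} with v ≠ 0) does not have property (Kˢ); indeed, a horizontal half line cannot be moved continuously to a vertical half line while touching only a set of finite area. -/
open MeasureTheory Set Filter

noncomputable section

/-!
Write `M t x = M t p + u t * (x - p)` with `‖u t‖ = 1`, so that at time `t` the half line
`p + ℝ≥0 · v` sits as the ray from `M t p` in direction `u t * v`. Suppose `u 1 ≠ 1` and pick
`e` with `e ^ 2 = u 1`, `0 < e.im`. In the coordinates `z = p + v * ζ`, take `ζ` within `1` of
`r * e` with `r` large. If neither `ζ` nor `-ζ` is ever hit by the ray, both stay off it, so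
their arguments as seen from the moving ray are continuous in `t`. At `t = 0` they lie on
opposite sides of the ray, and at `t = 1` (the ray having turned by `e ^ 2` while `ζ` points
along `e`) on swapped sides; so at some time they point the same way from the ray's base. That is
impossible, since the base stays a bounded distance from `p` and therefore sees `ζ` and `-ζ` at
an obtuse angle. Hence the swept set together with its reflection through `p` contains infinitely
many disjoint discs of radius `‖v‖`.
-/

open Complex Metric ComplexOrder

theorem exists_nonneg_of_inner_neg {w w' : ℝ → ℂ} {a b : ℝ} (hab : a ≤ b)
    (hw : ContinuousOn w (Icc a b)) (hw' : ContinuousOn w' (Icc a b))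
    (hinner : ∀ t ∈ Icc a b, inner ℝ (w t) (w' t) < 0)
    (ha : 0 < (w a).im) (ha' : (w' a).im < 0) (hb : (w b).im < 0) (hb' : 0 < (w' b).im) :
    ∃ t ∈ Icc a b, 0 ≤ w t ∨ 0 ≤ w' t := by
  by_contra! hneg
  have hslit {f : ℝ → ℂ} (hf : ∀ t ∈ Icc a b, ¬ 0 ≤ f t) (t) (ht : t ∈ Icc a b) :
      -f t ∈ slitPlane := by
    rw [mem_slitPlane_iff_not_le_zero, neg_nonpos]
    exact hf t ht
  have harg {f : ℝ → ℂ} (hf : ∀ t ∈ Icc a b, ¬ 0 ≤ f t) (hfc : ContinuousOn f (Icc a b)) :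
      ContinuousOn (fun t => arg (-f t)) (Icc a b) := fun t ht =>
    (continuousAt_arg (hslit hf t ht)).comp_continuousWithinAt (f := fun t => -f t) (hfc t ht).neg
  have hw0 : ∀ t ∈ Icc a b, ¬ 0 ≤ w t := fun t ht => (hneg t ht).1
  have hw'0 : ∀ t ∈ Icc a b, ¬ 0 ≤ w' t := fun t ht => (hneg t ht).2
  obtain ⟨t, ht, heq⟩ : ∃ t ∈ Icc a b, arg (-w' t) - arg (-w t) = 0 := by
    refine intermediate_value_Icc' hab (f := fun t => arg (-w' t) - arg (-w t))
      ((harg hw'0 hw').sub (harg hw0 hw)) ⟨?_, ?_⟩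
    · have h1 : arg (-w' b) < 0 := arg_neg_iff.2 (by simpa using hb')
      have h2 : 0 ≤ arg (-w b) := arg_nonneg_iff.2 (by simpa using hb.le)
      linarith
    · have h1 : 0 ≤ arg (-w' a) := arg_nonneg_iff.2 (by simpa using ha'.le)
      have h2 : arg (-w a) < 0 := arg_neg_iff.2 (by simpa using ha)
      linarith
  have hne {f : ℝ → ℂ} (hf : ∀ t ∈ Icc a b, ¬ 0 ≤ f t) : -f t ≠ 0 :=
    slitPlane_ne_zero (hslit hf t ht)
  have hprop := (arg_eq_arg_iff (hne hw0) (hne hw'0)).1 (sub_eq_zero.1 heq).symm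
  have hw't : w' t = ((‖w' t‖ / ‖w t‖ : ℝ) : ℂ) * w t := by
    simpa [neg_eq_iff_eq_neg] using hprop.symm
  have := hinner t ht
  rw [hw't, ← Complex.real_smul, real_inner_smul_right, real_inner_self_eq_norm_sq] at this
  exact this.not_ge (by positivity)

theorem inner_add_div_neg_add_div {u : ℂ} (hu : ‖u‖ = 1) (x y : ℂ) :
    inner ℝ ((x + y) / u) ((-x + y) / u) = ‖y‖ ^ 2 - ‖x‖ ^ 2 := by
  have hu' : normSq u = 1 := by rw [normSq_eq_norm_sq, hu, one_pow]
  rw [Complex.inner, div_eq_mul_inv, div_eq_mul_inv, inv_eq_conj hu, map_mul, conj_conj,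
    ← normSq_eq_norm_sq, ← normSq_eq_norm_sq]
  simp only [mul_re, mul_im, add_re, add_im, neg_re, neg_im, conj_re, conj_im,
    normSq_apply] at hu' ⊢
  linear_combination (y.re * y.re + y.im * y.im - x.re * x.re - x.im * x.im) * hu'

theorem exists_sq_eq_of_not_nonneg {u : ℂ} (hu : ¬ 0 ≤ u) : ∃ e : ℂ, e ^ 2 = u ∧ 0 < e.im := by
  obtain ⟨e, he⟩ := IsAlgClosed.exists_pow_nat_eq u two_pos
  rcases lt_trichotomy e.im 0 with him | him | him
  · exact ⟨-e, by rw [neg_sq, he], by simpa using him⟩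
  · refine absurd ?_ hu
    rw [← he, ← re_add_im e, him, ofReal_zero, zero_mul, add_zero, ← ofReal_pow]
    exact zero_le_real.2 (sq_nonneg _)
  · exact ⟨e, he, him⟩

theorem exists_nonneg_div_of_rotating_ray {u δ : ℝ → ℂ} {C r : ℝ} {e ζ : ℂ}
    (hu : ContinuousOn u (Icc 0 1)) (hδ : ContinuousOn δ (Icc 0 1))
    (hu_norm : ∀ t ∈ Icc (0 : ℝ) 1, ‖u t‖ = 1) (hδC : ∀ t ∈ Icc (0 : ℝ) 1, ‖δ t‖ ≤ C)
    (hu0 : u 0 = 1) (hδ0 : δ 0 = 0) (hu1 : u 1 = e ^ 2)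
    (hr : 1 + C < r * e.im) (hζ : ‖ζ - r * e‖ < 1) :
    ∃ t ∈ Icc (0 : ℝ) 1, 0 ≤ (ζ + δ t) / u t ∨ 0 ≤ (-ζ + δ t) / u t := by
  have h0 : (0 : ℝ) ∈ Icc (0 : ℝ) 1 := ⟨le_rfl, zero_le_one⟩
  have h1 : (1 : ℝ) ∈ Icc (0 : ℝ) 1 := ⟨zero_le_one, le_rfl⟩
  have hune : ∀ t ∈ Icc (0 : ℝ) 1, u t ≠ 0 := fun t ht =>
    norm_ne_zero_iff.1 (by rw [hu_norm t ht]; exact one_ne_zero)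
  have he : normSq e = 1 := by
    rw [normSq_eq_norm_sq, ← norm_pow, ← hu1, hu_norm 1 h1]
  have hC : 0 ≤ C := (norm_nonneg _).trans (hδC 0 h0)
  have hζ_im : r * e.im - 1 < ζ.im := by
    have := (abs_lt.1 ((abs_im_le_norm _).trans_lt hζ)).1
    rw [sub_im, im_ofReal_mul] at this
    linarith
  have hζ_norm : C < ‖ζ‖ := by
    have h := norm_sub_norm_le (r * e) (r * e - ζ)
    rw [sub_sub_cancel, norm_sub_rev] at h
    linarith [le_abs_self (r * e).im, abs_im_le_norm (r * e), im_ofReal_mul r e]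
  -- the turn by `e ^ 2` carries the direction `e` of `ζ` to `e⁻¹`
  have hturn (s : ℝ) (hs : |s| = 1) : |((s * ζ + δ 1) / u 1).im + s * r * e.im| < 1 + C := by
    have hsplit : (s * ζ + δ 1) / u 1 = s * r * e⁻¹ + (s * (ζ - r * e) + δ 1) / u 1 := by
      have : e ≠ 0 := fun h => by simp [h] at he
      rw [hu1]; field_simp; ring
    rw [hsplit, add_im, show ((s : ℂ) * r * e⁻¹).im = -(s * r * e.im) by simp [inv_im, he],
      neg_add_cancel_comm]
    refine (abs_im_le_norm _).trans_lt ?_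
    rw [norm_div, hu_norm 1 h1, div_one]
    calc ‖s * (ζ - r * e) + δ 1‖ ≤ ‖s * (ζ - r * e)‖ + ‖δ 1‖ := norm_add_le _ _
      _ < 1 + C := by rw [norm_mul, norm_real, Real.norm_eq_abs, hs, one_mul]; linarith [hδC 1 h1]
  refine exists_nonneg_of_inner_neg zero_le_one
    ((continuousOn_const.add hδ).div hu hune) ((continuousOn_const.add hδ).div hu hune)
    (fun t ht => ?_) ?_ ?_ ?_ ?_
  · rw [inner_add_div_neg_add_div (hu_norm t ht)]
    nlinarith [norm_nonneg (δ t), hδC t ht]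
  · simp only [hu0, hδ0, add_zero, div_one]
    linarith
  · simp only [hu0, hδ0, add_zero, div_one, neg_im]
    linarith
  · have := (abs_lt.1 (hturn 1 abs_one)).2
    simp only [ofReal_one, one_mul] at this
    linarith
  · have := (abs_lt.1 (hturn (-1) (by simp))).1
    simp only [ofReal_neg, ofReal_one, neg_mul, one_mul] at this
    linarith

theorem measure_iUnion_ball_eq_top {E : Type*} [NormedAddCommGroup E] [MeasurableSpace E]
    [BorelSpace E] (μ : Measure E) [μ.IsAddHaarMeasure] {c : ℕ → E} {ρ : ℝ} (hρ : 0 < ρ)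
    (hc : Pairwise fun i j => 2 * ρ ≤ dist (c i) (c j)) :
    μ (⋃ k, ball (c k) ρ) = ⊤ := by
  rw [measure_iUnion (fun i j hij => ball_disjoint_ball (by linarith [hc hij]))
    fun _ => measurableSet_ball]
  simp_rw [Measure.addHaar_ball_center μ _ ρ]
  exact ENNReal.tsum_const_eq_top_of_ne_zero (measure_ball_pos μ 0 hρ).ne'

theorem volume_eq_top_of_forall_mem_or_reflect {S : Set ℂ} {p v e : ℂ} {R : ℝ} (hv : v ≠ 0)
    (he : ‖e‖ = 1) (hS : ∀ r ≥ R, ∀ ζ ∈ ball (r * e) 1, p + v * ζ ∈ S ∨ p - v * ζ ∈ S) :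
    volume S = ⊤ := by
  set c : ℕ → ℂ := fun k => p + v * ((R + 2 * k : ℝ) * e)
  have hcover : ⋃ k, ball (c k) ‖v‖ ⊆ S ∪ (fun z => 2 * p - z) ⁻¹' S := by
    refine iUnion_subset fun k z hz => ?_
    have hζ : (z - p) / v ∈ ball ((R + 2 * k : ℝ) * e) 1 := by
      rw [mem_ball, dist_eq, ← mul_div_cancel_left₀ ((R + 2 * k : ℝ) * e) hv, ← sub_div,
        norm_div, div_lt_one (norm_pos_iff.2 hv), sub_sub, ← dist_eq]
      exact hz
    rcases hS _ (by simp) _ hζ with h | h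
    · rw [mul_div_cancel₀ _ hv, add_sub_cancel] at h
      exact .inl h
    · rw [mul_div_cancel₀ _ hv] at h
      exact .inr (show 2 * p - z ∈ S by convert h using 1; ring)
  have hdist : Pairwise fun i j => 2 * ‖v‖ ≤ dist (c i) (c j) := by
    intro i j hij
    have : (1 : ℝ) ≤ |(i : ℝ) - j| := by
      exact_mod_cast Int.one_le_abs (sub_ne_zero.2 (Int.natCast_inj.not.2 hij))
    have hc : c i - c j = v * e * (2 * ((i : ℝ) - j) : ℝ) := by
      simp only [c]
      push_cast
      ring
    rw [dist_eq, hc, norm_mul, norm_mul, he, norm_real, Real.norm_eq_abs, abs_mul, abs_two]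
    nlinarith [norm_nonneg v]
  have hreflect : volume ((fun z : ℂ => 2 * p - z) ⁻¹' S) = volume S := by
    rw [show (fun z : ℂ => 2 * p - z) = (2 * p + ·) ∘ Neg.neg by ext; simp [sub_eq_add_neg],
      preimage_comp, Measure.measure_preimage_neg, measure_preimage_add]
  have := (measure_iUnion_ball_eq_top volume (norm_pos_iff.2 hv) hdist).symm.trans_le
    ((measure_mono hcover).trans (measure_union_le _ _))
  rw [hreflect, top_le_iff, ENNReal.add_eq_top, or_self] at this
  exact this

def halfLine (p v : ℂ) : Set ℂ := {x | ∃ t : ℝ, 0 ≤ t ∧ x = p + (t : ℂ) * v}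

namespace IsContMovement

variable {M : ℝ → ℂ → ℂ} {t : ℝ}

theorem apply_eq (hM : IsContMovement M) (ht : t ∈ Icc (0 : ℝ) 1) (x : ℂ) :
    M t x = M t 0 + (M t 1 - M t 0) * x := by
  obtain ⟨u, c, -, h⟩ := hM.1 t ht
  rw [h]
  ring

theorem norm_sub_eq_one (hM : IsContMovement M) (ht : t ∈ Icc (0 : ℝ) 1) :
    ‖M t 1 - M t 0‖ = 1 := by
  obtain ⟨u, c, hu, h⟩ := hM.1 t ht
  simpa [h] using hu

theorem continuousOn_apply (hM : IsContMovement M) (x : ℂ) :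
    ContinuousOn (fun t => M t x) (Icc 0 1) :=
  hM.2.1.comp (Continuous.prodMk_left x).continuousOn fun _ ht => ⟨ht, mem_univ x⟩

theorem mem_sweep_halfLine (hM : IsContMovement M) (ht : t ∈ Icc (0 : ℝ) 1) {p v z : ℂ}
    (hv : v ≠ 0) (hz : 0 ≤ (z - M t p) / ((M t 1 - M t 0) * v)) :
    z ∈ sweep M (halfLine p v) := by
  have hu : M t 1 - M t 0 ≠ 0 := norm_ne_zero_iff.1 (by simp [hM.norm_sub_eq_one ht])
  set s := (z - M t p) / ((M t 1 - M t 0) * v)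
  refine ⟨t, ht, p + s * v, ⟨s.re, (nonneg_iff.1 hz).1, by rw [← eq_re_of_ofReal_le hz]⟩, ?_⟩
  have hMt : M t (p + s * v) = M t p + (M t 1 - M t 0) * v * s := by
    rw [hM.apply_eq ht, hM.apply_eq ht p]
    ring
  rw [hMt, mul_div_cancel₀ _ (mul_ne_zero hu hv), add_sub_cancel]

theorem exists_mem_sweep_or_reflect (hM : IsContMovement M) {p v : ℂ} (hv : v ≠ 0)
    (hM1 : M 1 1 - M 1 0 ≠ 1) :
    ∃ e : ℂ, ‖e‖ = 1 ∧ ∃ R : ℝ, ∀ r ≥ R, ∀ ζ ∈ ball (r * e) 1,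
      p + v * ζ ∈ sweep M (halfLine p v) ∨ p - v * ζ ∈ sweep M (halfLine p v) := by
  have h1 : (1 : ℝ) ∈ Icc (0 : ℝ) 1 := ⟨zero_le_one, le_rfl⟩
  set u : ℝ → ℂ := fun t => M t 1 - M t 0
  set δ : ℝ → ℂ := fun t => (p - M t p) / v
  have hδ : ContinuousOn δ (Icc 0 1) :=
    (continuousOn_const.sub (hM.continuousOn_apply p)).div_const v
  obtain ⟨C, hC⟩ := isCompact_Icc.exists_bound_of_continuousOn hδ
  have hu1 : ¬ 0 ≤ u 1 := fun h => hM1 <| show u 1 = 1 by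
    rw [eq_coe_norm_of_nonneg h, hM.norm_sub_eq_one h1, ofReal_one]
  obtain ⟨e, he, he_im⟩ := exists_sq_eq_of_not_nonneg hu1
  have he_norm : ‖e‖ = 1 := by
    rw [← pow_eq_one_iff_of_nonneg (norm_nonneg e) two_ne_zero, ← norm_pow, he,
      hM.norm_sub_eq_one h1]
  refine ⟨e, he_norm, (2 + C) / e.im, fun r hr ζ hζ => ?_⟩
  have hr' : 1 + C < r * e.im := by
    rw [ge_iff_le, div_le_iff₀ he_im] at hr
    linarith
  obtain ⟨t, ht, h⟩ := exists_nonneg_div_of_rotating_ray (u := u)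
    ((hM.continuousOn_apply 1).sub (hM.continuousOn_apply 0)) hδ
    (fun t ht => hM.norm_sub_eq_one ht) hC (by simp [u, hM.2.2]) (by simp [δ, hM.2.2]) he.symm hr'
    (by rwa [mem_ball, dist_eq] at hζ)
  refine h.imp (fun h => hM.mem_sweep_halfLine ht hv ?_) (fun h => hM.mem_sweep_halfLine ht hv ?_)
  all_goals
    convert h using 1
    simp only [u, δ]
    field_simp
    ring

theorem volume_sweep_halfLine_eq_top (hM : IsContMovement M) {p v : ℂ} (hv : v ≠ 0)
    (hM1 : M 1 1 - M 1 0 ≠ 1) :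
    volume (sweep M (halfLine p v)) = ⊤ := by
  obtain ⟨e, he, R, hR⟩ := hM.exists_mem_sweep_or_reflect hv hM1
  exact volume_eq_top_of_forall_mem_or_reflect hv he hR

end IsContMovement

/-- Half lines do not have property (Kˢ); indeed, a horizontal half line
cannot be moved continuously onto a vertical half line while touching only a
set of finite area. -/
theorem stmt_17 :
    (∀ p v : ℂ, v ≠ 0 → ¬ HasPropKs {x | ∃ t : ℝ, 0 ≤ t ∧ x = p + (t : ℂ) * v}) ∧
    (∀ M : ℝ → ℂ → ℂ, IsContMovement M → ∀ q w : ℂ, w ≠ 0 → w.re = 0 →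
      (M 1) '' {x : ℂ | ∃ t : ℝ, 0 ≤ t ∧ x = (t : ℂ)} =
        {x | ∃ t : ℝ, 0 ≤ t ∧ x = q + (t : ℂ) * w} →
      MeasureTheory.volume (sweep M {x : ℂ | ∃ t : ℝ, 0 ≤ t ∧ x = (t : ℂ)}) = ⊤) := by
  refine ⟨fun p v hv hKs => ?_, fun M hM q w _ hw him => ?_⟩
  · obtain ⟨M, hM, hM1, hvol⟩ :=
      hKs (fun x => I * x + (p - I * p)) ⟨I, _, norm_I, rfl⟩ 1 one_pos
    refine (hvol.trans_le le_top).ne (hM.volume_sweep_halfLine_eq_top hv ?_)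
    rw [hM1]
    simp [Complex.ext_iff]
  · have hmem (x : ℝ) (hx : 0 ≤ x) : ∃ t : ℝ, M 1 x = q + t * w := by
      obtain ⟨t, -, ht⟩ := him.subset ⟨x, ⟨x, hx, rfl⟩, rfl⟩
      exact ⟨t, ht⟩
    obtain ⟨t₀, ht₀⟩ := hmem 0 le_rfl
    obtain ⟨t₁, ht₁⟩ := hmem 1 zero_le_one
    rw [ofReal_zero] at ht₀
    rw [ofReal_one] at ht₁
    have hM1 : M 1 1 - M 1 0 ≠ 1 := fun h => by
      rw [ht₀, ht₁] at h
      simpa [hw] using congrArg re h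
    simpa [halfLine] using hM.volume_sweep_halfLine_eq_top one_ne_zero (p := 0) hM1
end
end
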